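/- arXiv:2312.14863 — 3 statements merged into one kernel-verified Lean document; each statement's English description precedes it below -/
import Mathlib

section
/- If A is a generalized t-edge distance-balanced graph in which m_0(f) takes a constant value on all edges, then the edge-Szeged index of A equals t·|E(A)|·(|E(A)| − m_0 − 1)²/(t+1)², where m_0 is that constant value. -/
open SimpleGraph Finset

/-- Distance from a vertex to an edge: the minimum distance to its endpoints. -/
noncomputable def edgeDist {V : Type*} (G : SimpleGraph V) (v : V) (e : Sym2 V) : ℕ :=
  Sym2.lift ⟨fun x y => min (G.dist v x) (G.dist v y), fun _ _ => min_comm _ _⟩ e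

/-- Number of edges strictly closer to `α` than to `β`. -/
noncomputable def mCount {V : Type*} (G : SimpleGraph V) (α β : V) : ℕ :=
  {e ∈ G.edgeSet | edgeDist G α e < edgeDist G β e}.ncard

/-- Number of vertices strictly closer to `α` than to `β`. -/
noncomputable def nCount {V : Type*} (G : SimpleGraph V) (α β : V) : ℕ :=
  {w : V | G.dist w α < G.dist w β}.ncard

/-- Number of edges other than `αβ` itself equidistant from `α` and `β`. -/
noncomputable def m0Count {V : Type*} (G : SimpleGraph V) (α β : V) : ℕ :=
  {e ∈ G.edgeSet | e ≠ s(α, β) ∧ edgeDist G α e = edgeDist G β e}.ncard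

/-- The distance-partition class `D'^i_j(αβ)`: edges at distance `i` from `α`
and `j` from `β`. -/
def Dset {V : Type*} (G : SimpleGraph V) (α β : V) (i j : ℕ) : Set (Sym2 V) :=
  {e ∈ G.edgeSet | edgeDist G α e = i ∧ edgeDist G β e = j}

/-- Generalized t-edge distance-balanced graph. -/
def GtEDB {V : Type*} (G : SimpleGraph V) (t : ℕ) : Prop :=
  ∀ α β : V, G.Adj α β →
    mCount G α β = t * mCount G β α ∨ mCount G β α = t * mCount G α β

/-- The lexicographic product of two simple graphs. -/
def lexProd {V W : Type*} (A : SimpleGraph V) (B : SimpleGraph W) :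
    SimpleGraph (V × W) where
  Adj p q := A.Adj p.1 q.1 ∨ (p.1 = q.1 ∧ B.Adj p.2 q.2)
  symm := by
    constructor
    rintro p q (h | ⟨h1, h2⟩)
    · exact Or.inl h.symm
    · exact Or.inr ⟨h1.symm, h2.symm⟩
  loopless := by
    constructor
    rintro p (h | ⟨_, h⟩)
    · exact A.irrefl h
    · exact B.irrefl h

/-!
On every edge `αβ` the balance condition `m_α = t·m_β` and the count
`m_α + m_β = |E| - m₀ - 1` force `(t+1)²·m_α·m_β = t·(|E| - m₀ - 1)²`, so all edges
contribute the same amount to the edge-Szeged index.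
-/

theorem add_one_sq_mul_mul_eq_of_eq_mul {a b t : ℕ} (h : a = t * b ∨ b = t * a) :
    (t + 1) ^ 2 * (a * b) = t * (a + b) ^ 2 := by
  rcases h with rfl | rfl <;> ring

theorem mCount_add_mCount_eq_of_m0Count_eq {V : Type*} (G : SimpleGraph V) {α β : V} {m₀ : ℕ}
    (htri : mCount G α β + mCount G β α + m0Count G α β = G.edgeSet.ncard - 1)
    (hm0 : m0Count G α β = m₀) :
    mCount G α β + mCount G β α = G.edgeSet.ncard - m₀ - 1 := by
  omega

theorem stmt6_general {V : Type*} [Fintype V] (G : SimpleGraph V)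
    [DecidableRel G.Adj] (t m₀ : ℕ)
    (htri : ∀ α β : V, G.Adj α β →
      mCount G α β + mCount G β α + m0Count G α β = G.edgeSet.ncard - 1)
    (hGt : GtEDB G t)
    (hm0 : ∀ α β : V, G.Adj α β → m0Count G α β = m₀) :
    (t + 1) ^ 2 * (∑ e ∈ G.edgeFinset,
        Sym2.lift ⟨fun x y => mCount G x y * mCount G y x, fun x y => mul_comm _ _⟩ e)
      = t * G.edgeSet.ncard * (G.edgeSet.ncard - m₀ - 1) ^ 2 := by
  have hedge : ∀ e ∈ G.edgeFinset,
      (t + 1) ^ 2 * Sym2.lift ⟨fun x y => mCount G x y * mCount G y x,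
        fun _ _ => mul_comm _ _⟩ e = t * (G.edgeSet.ncard - m₀ - 1) ^ 2 := by
    intro e he
    induction e using Sym2.inductionOn with
    | hf x y =>
      have hxy : G.Adj x y := by simpa using he
      rw [Sym2.lift_mk, add_one_sq_mul_mul_eq_of_eq_mul (hGt x y hxy),
        mCount_add_mCount_eq_of_m0Count_eq G (htri x y hxy) (hm0 x y hxy)]
  rw [Finset.mul_sum, Finset.sum_congr rfl hedge, Finset.sum_const, smul_eq_mul,
    ← G.coe_edgeFinset, Set.ncard_coe_finset]
  ring

/-- for a Gt-EDB graph with constant `m₀`, the edge-Szeged index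
satisfies `(t+1)² · Sz_e(A) = t · |E| · (|E| - m₀ - 1)²`. -/
theorem stmt6 {V : Type*} [Fintype V] [DecidableEq V] (G : SimpleGraph V)
    [DecidableRel G.Adj] (t m₀ : ℕ) (hconn : G.Connected)
    (htri : ∀ α β : V, G.Adj α β →
      mCount G α β + mCount G β α + m0Count G α β = G.edgeSet.ncard - 1)
    (hGt : GtEDB G t)
    (hm0 : ∀ α β : V, G.Adj α β → m0Count G α β = m₀) :
    (t + 1) ^ 2 * (∑ e ∈ G.edgeFinset,
        Sym2.lift ⟨fun x y => mCount G x y * mCount G y x, fun x y => mul_comm _ _⟩ e)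
      = t * G.edgeSet.ncard * (G.edgeSet.ncard - m₀ - 1) ^ 2 :=
  stmt6_general G t m₀ htri hGt hm0
end

section
/- For the Cartesian product A□B and an edge ((a₁,b),(a₂,b)) arising from an edge a₁a₂ of A, the number of edges of A□B strictly closer to (a₁,b) than to (a₂,b) equals m_{a₁}(a₁a₂)·|V(B)| + n_{a₁}(a₁a₂)·|E(B)|. -/
/-
Distances in `A □ B` add up coordinatewise. An edge of `A □ B` is either a copy `e × {w}` of an
edge `e` of `A`, in which case the common summand `d_B(b, w)` cancels and it is closer to `(a₁, b)`
exactly when `e` is closer to `a₁`; or a copy `{x} × f` of an edge of `B`, in which case it is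
closer to `(a₁, b)` exactly when the vertex `x` is closer to `a₁`. Counting the two kinds of
edges separately gives `m_{a₁} · |V(B)| + n_{a₁} · |E(B)|`.
-/

open SimpleGraph Finset

def horizontalEdge {V W : Type*} (p : Sym2 V × W) : Sym2 (V × W) := p.1.map (·, p.2)

def verticalEdge {V W : Type*} (p : V × Sym2 W) : Sym2 (V × W) := p.2.map (p.1, ·)

section

variable {V W : Type*}

@[simp] lemma horizontalEdge_mk (x y : V) (w : W) :
    horizontalEdge (s(x, y), w) = s((x, w), (y, w)) := rfl

@[simp] lemma verticalEdge_mk (x : V) (u v : W) :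
    verticalEdge (x, s(u, v)) = s((x, u), (x, v)) := rfl

lemma horizontalEdge_injective : (horizontalEdge : Sym2 V × W → Sym2 (V × W)).Injective := by
  rintro ⟨e, w⟩ ⟨e', w'⟩ h
  induction e using Sym2.inductionOn
  induction e' using Sym2.inductionOn
  simp only [horizontalEdge_mk, Sym2.eq_iff, Prod.mk.injEq] at h ⊢
  tauto

lemma verticalEdge_injective : (verticalEdge : V × Sym2 W → Sym2 (V × W)).Injective := by
  rintro ⟨x, e⟩ ⟨x', e'⟩ h
  induction e using Sym2.inductionOn
  induction e' using Sym2.inductionOn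
  simp only [verticalEdge_mk, Sym2.eq_iff, Prod.mk.injEq] at h ⊢
  tauto

lemma horizontalEdge_ne_verticalEdge {e : Sym2 V} (he : ¬e.IsDiag) (w : W) (p : V × Sym2 W) :
    horizontalEdge (e, w) ≠ verticalEdge p := by
  obtain ⟨x, f⟩ := p
  induction e using Sym2.inductionOn
  induction f using Sym2.inductionOn
  simp only [Sym2.mk_isDiag_iff] at he
  simp only [horizontalEdge_mk, verticalEdge_mk, ne_eq, Sym2.eq_iff, Prod.mk.injEq]
  rintro (⟨⟨rfl, -⟩, rfl, -⟩ | ⟨⟨rfl, -⟩, rfl, -⟩) <;> exact he rfl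

lemma ncard_image_horizontalEdge_union_image_verticalEdge [Finite V] [Finite W]
    {s : Set (Sym2 V × W)} (hs : ∀ p ∈ s, ¬p.1.IsDiag) (t : Set (V × Sym2 W)) :
    (horizontalEdge '' s ∪ verticalEdge '' t).ncard = s.ncard + t.ncard := by
  have hdisj : Disjoint (horizontalEdge '' s) (verticalEdge '' t) := by
    rw [Set.disjoint_left]
    rintro _ ⟨⟨e, w⟩, he, rfl⟩ ⟨p, -, hp⟩
    exact horizontalEdge_ne_verticalEdge (hs _ he) w p hp.symm
  rw [Set.ncard_union_eq hdisj, Set.ncard_image_of_injective _ horizontalEdge_injective,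
    Set.ncard_image_of_injective _ verticalEdge_injective]

end

namespace SimpleGraph

variable {V W : Type*} {A : SimpleGraph V} {B : SimpleGraph W}

lemma dist_boxProd_of_reachable {x y : V × W} (h₁ : A.Reachable x.1 y.1)
    (h₂ : B.Reachable x.2 y.2) :
    (A □ B).dist x y = A.dist x.1 y.1 + B.dist x.2 y.2 := by
  have h : (A □ B).Reachable x y := reachable_boxProd.2 ⟨h₁, h₂⟩
  apply Nat.cast_injective (R := ℕ∞)
  push_cast
  rw [h.coe_dist_eq_edist, h₁.coe_dist_eq_edist, h₂.coe_dist_eq_edist, edist_boxProd]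

lemma edgeSet_boxProd : (A □ B).edgeSet =
    horizontalEdge '' (A.edgeSet ×ˢ Set.univ) ∪ verticalEdge '' (Set.univ ×ˢ B.edgeSet) := by
  ext e
  constructor
  · induction e using Sym2.inductionOn with
    | hf p q =>
    obtain ⟨x, u⟩ := p
    obtain ⟨y, v⟩ := q
    rw [mem_edgeSet, boxProd_adj]
    rintro (⟨hxy, rfl : u = v⟩ | ⟨huv, rfl : x = y⟩)
    · exact Or.inl ⟨(s(x, y), u), ⟨hxy, trivial⟩, rfl⟩
    · exact Or.inr ⟨(x, s(u, v)), ⟨trivial, huv⟩, rfl⟩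
  · rintro (⟨⟨e, w⟩, ⟨he, -⟩, rfl⟩ | ⟨⟨z, f⟩, ⟨-, hf⟩, rfl⟩)
    · induction e using Sym2.inductionOn
      exact Or.inl ⟨he, rfl⟩
    · induction f using Sym2.inductionOn
      exact Or.inr ⟨hf, rfl⟩

lemma edgeDist_horizontalEdge (hA : A.Preconnected) (hB : B.Preconnected) (p : V × W)
    (e : Sym2 V) (w : W) :
    edgeDist (A □ B) p (horizontalEdge (e, w)) = edgeDist A p.1 e + B.dist p.2 w := by
  induction e using Sym2.inductionOn with
  | hf x y =>
  simp only [horizontalEdge_mk, edgeDist, Sym2.lift_mk,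
    dist_boxProd_of_reachable (hA _ _) (hB _ _)]
  omega

lemma edgeDist_verticalEdge (hA : A.Preconnected) (hB : B.Preconnected) (p : V × W)
    (x : V) (f : Sym2 W) :
    edgeDist (A □ B) p (verticalEdge (x, f)) = A.dist p.1 x + edgeDist B p.2 f := by
  induction f using Sym2.inductionOn with
  | hf u v =>
  simp only [verticalEdge_mk, edgeDist, Sym2.lift_mk,
    dist_boxProd_of_reachable (hA _ _) (hB _ _)]
  omega

lemma sep_edgeSet_boxProd (P : Sym2 (V × W) → Prop) :
    {e ∈ (A □ B).edgeSet | P e} =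
      horizontalEdge '' {p ∈ A.edgeSet ×ˢ Set.univ | P (horizontalEdge p)} ∪
        verticalEdge '' {p ∈ Set.univ ×ˢ B.edgeSet | P (verticalEdge p)} := by
  rw [edgeSet_boxProd]
  ext e
  simp only [Set.mem_union, Set.mem_image]
  grind

end SimpleGraph

theorem stmt8_general {V W : Type*} [Fintype V] [Fintype W]
    (A : SimpleGraph V) (B : SimpleGraph W)
    (hA : A.Connected) (hB : B.Connected)
    (a₁ a₂ : V) (b : W) :
    mCount (A.boxProd B) (a₁, b) (a₂, b)
      = mCount A a₁ a₂ * Fintype.card W + nCount A a₁ a₂ * B.edgeSet.ncard := by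
  have hS : {e ∈ (A □ B).edgeSet | edgeDist (A □ B) (a₁, b) e < edgeDist (A □ B) (a₂, b) e} =
      horizontalEdge '' ({e ∈ A.edgeSet | edgeDist A a₁ e < edgeDist A a₂ e} ×ˢ Set.univ) ∪
        verticalEdge '' ({x | A.dist x a₁ < A.dist x a₂} ×ˢ B.edgeSet) := by
    rw [sep_edgeSet_boxProd]
    congr 2 <;> ext ⟨_, _⟩ <;>
      simp [edgeDist_horizontalEdge hA.preconnected hB.preconnected,
        edgeDist_verticalEdge hA.preconnected hB.preconnected, dist_comm, and_comm]
  rw [mCount, mCount, nCount, hS, ncard_image_horizontalEdge_union_image_verticalEdge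
      (fun p hp => A.not_isDiag_of_mem_edgeSet hp.1.1),
    Set.ncard_prod, Set.ncard_prod, Set.ncard_univ, Nat.card_eq_fintype_card]

/-- for an `A`-edge of the Cartesian product,
`m_{(a₁,b)} = m_{a₁}·|V(B)| + n_{a₁}·|E(B)|`. -/
theorem stmt8 {V W : Type*} [Fintype V] [Fintype W]
    (A : SimpleGraph V) (B : SimpleGraph W)
    (hA : A.Connected) (hB : B.Connected)
    (a₁ a₂ : V) (h : A.Adj a₁ a₂) (b : W) :
    mCount (A.boxProd B) (a₁, b) (a₂, b)
      = mCount A a₁ a₂ * Fintype.card W + nCount A a₁ a₂ * B.edgeSet.ncard :=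
  stmt8_general A B hA hB a₁ a₂ b
end

section
/- Let A and B be graphs such that the Cartesian product A□B is generalized t-nicely edge distance-balanced. Then, for every edge a₁a₂ of A and every edge b₁b₂ of B, m_{a₁}(a₁a₂)·|V(B)| + n_{a₁}(a₁a₂)·|E(B)| = m_{b₁}(b₁b₂)·|V(A)| + n_{b₁}(b₁b₂)·|E(A)| (both equal the common value t·γ'_{A□B} after consistent labeling), i.e., the weighted counts from A-edges and B-edges coincide. -/
open SimpleGraph Finset

/-! Distances in `G □ H` add coordinatewise, so an edge of `G □ H` is closer to `(a₁, b)`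
than to `(a₂, b)` exactly when it is a copy, in one of the `|W|` layers, of a `G`-edge closer
to `a₁`, or an `H`-edge lying over a vertex closer to `a₁`. This gives the identity for
`G`-edges; the one for `H`-edges follows through the isomorphism `G □ H ≃g H □ G`, and the
balance hypothesis, applied to one edge of each kind, makes both equal to `t * γ`. -/
namespace SimpleGraph

variable {V V' W : Type*} {G : SimpleGraph V} {G' : SimpleGraph V'}

@[simp]
lemma edgeDist_mk (v x y : V) : edgeDist G v s(x, y) = min (G.dist v x) (G.dist v y) := rfl

lemma Hom.edist_map_le (f : G →g G') (u v : V) : G'.edist (f u) (f v) ≤ G.edist u v :=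
  le_iInf fun p => (p.map f).edist_le.trans_eq (by rw [Walk.length_map])

lemma Iso.edist_map (e : G ≃g G') (u v : V) : G'.edist (e u) (e v) = G.edist u v :=
  le_antisymm (Hom.edist_map_le e.toHom u v) <| by
    simpa using Hom.edist_map_le e.symm.toHom (e u) (e v)

lemma Iso.dist_map (e : G ≃g G') (u v : V) : G'.dist (e u) (e v) = G.dist u v := by
  rw [dist, dist, e.edist_map]

lemma Iso.edgeDist_map (e : G ≃g G') (v : V) (s : Sym2 V) :
    edgeDist G' (e v) (s.map e) = edgeDist G v s := by
  induction s using Sym2.ind with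
  | _ x y => simp [e.dist_map]

lemma Iso.mCount_map (e : G ≃g G') (a b : V) : mCount G' (e a) (e b) = mCount G a b := by
  have hpre : {s ∈ G.edgeSet | edgeDist G a s < edgeDist G b s} =
      Sym2.map e ⁻¹' {s ∈ G'.edgeSet | edgeDist G' (e a) s < edgeDist G' (e b) s} := by
    ext s
    simp [e.map_mem_edgeSet_iff, e.edgeDist_map]
  rw [mCount, mCount, hpre, Set.ncard_preimage_of_injective_subset_range
    (Sym2.map.injective e.injective)]
  intro s _
  exact ⟨s.map e.symm, by simp [Sym2.map_map]⟩

variable {H : SimpleGraph W}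

lemma dist_boxProd (hG : G.Preconnected) (hH : H.Preconnected) (x y : V × W) :
    (G □ H).dist x y = G.dist x.1 y.1 + H.dist x.2 y.2 := by
  rw [dist, edist_boxProd, ENat.toNat_add (edist_ne_top_iff_reachable.2 (hG _ _))
    (edist_ne_top_iff_reachable.2 (hH _ _))]
  rfl

lemma edgeDist_boxProd_map_left (hG : G.Preconnected) (hH : H.Preconnected)
    (a : V) (b w : W) (s : Sym2 V) :
    edgeDist (G □ H) (a, b) (s.map (·, w)) = edgeDist G a s + H.dist b w := by
  induction s using Sym2.ind with
  | _ x y => simp [dist_boxProd hG hH, min_add_add_right]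

lemma edgeDist_boxProd_map_right (hG : G.Preconnected) (hH : H.Preconnected)
    (a u : V) (b : W) (s : Sym2 W) :
    edgeDist (G □ H) (a, b) (s.map (u, ·)) = G.dist a u + edgeDist H b s := by
  induction s using Sym2.ind with
  | _ x y => simp [dist_boxProd hG hH, min_add_add_left]

lemma ncard_sep_edgeSet_boxProd [Finite V] [Finite W] (P : Sym2 (V × W) → Prop) :
    {e ∈ (G □ H).edgeSet | P e}.ncard =
      {p : Sym2 V × W | p.1 ∈ G.edgeSet ∧ P (p.1.map (·, p.2))}.ncard +
      {p : V × Sym2 W | p.2 ∈ H.edgeSet ∧ P (p.2.map (p.1, ·))}.ncard := by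
  set f : Sym2 V × W → Sym2 (V × W) := fun p => p.1.map (·, p.2)
  set g : V × Sym2 W → Sym2 (V × W) := fun p => p.2.map (p.1, ·)
  have hf : f.Injective := by
    rintro ⟨s, w⟩ ⟨s', w'⟩ h
    induction s using Sym2.ind
    induction s' using Sym2.ind
    simp only [f, Sym2.map_mk, Sym2.eq_iff, Prod.mk.injEq] at h ⊢
    tauto
  have hg : g.Injective := by
    rintro ⟨u, s⟩ ⟨u', s'⟩ h
    induction s using Sym2.ind
    induction s' using Sym2.ind
    simp only [g, Sym2.map_mk, Sym2.eq_iff, Prod.mk.injEq] at h ⊢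
    tauto
  have hdisj : Disjoint (f '' {p | p.1 ∈ G.edgeSet ∧ P (f p)})
      (g '' {p | p.2 ∈ H.edgeSet ∧ P (g p)}) := by
    rw [Set.disjoint_left]
    rintro _ ⟨⟨s, w⟩, ⟨hs, -⟩, rfl⟩ ⟨⟨u, s'⟩, -, h⟩
    induction s using Sym2.ind
    induction s' using Sym2.ind
    simp only [f, g, Sym2.map_mk, Sym2.eq_iff, Prod.mk.injEq] at h
    rcases h with ⟨⟨rfl, -⟩, rfl, -⟩ | ⟨⟨rfl, -⟩, rfl, -⟩ <;>
      exact (G.mem_edgeSet.1 hs).ne rfl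
  have hunion : {e ∈ (G □ H).edgeSet | P e} =
      f '' {p | p.1 ∈ G.edgeSet ∧ P (f p)} ∪ g '' {p | p.2 ∈ H.edgeSet ∧ P (g p)} := by
    ext e
    constructor
    · rintro ⟨he, hP⟩
      induction e using Sym2.ind with
      | _ x y =>
        obtain ⟨x₁, x₂⟩ := x
        obtain ⟨y₁, y₂⟩ := y
        rw [mem_edgeSet, boxProd_adj] at he
        rcases he with ⟨hadj, rfl⟩ | ⟨hadj, rfl⟩
        exacts [Or.inl ⟨(s(x₁, y₁), x₂), ⟨hadj, hP⟩, rfl⟩,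
          Or.inr ⟨(x₁, s(x₂, y₂)), ⟨hadj, hP⟩, rfl⟩]
    · rintro (⟨p, ⟨hp, hP⟩, rfl⟩ | ⟨p, ⟨hp, hP⟩, rfl⟩)
      · exact ⟨(boxProdLeft G H p.2).map_mem_edgeSet_iff.2 hp, hP⟩
      · exact ⟨(boxProdRight G H p.1).map_mem_edgeSet_iff.2 hp, hP⟩
  rw [hunion, Set.ncard_union_eq hdisj, hf.injOn.ncard_image, hg.injOn.ncard_image]

lemma mCount_boxProd_left [Finite V] [Finite W] (hG : G.Preconnected) (hH : H.Preconnected)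
    (a₁ a₂ : V) (b : W) :
    mCount (G □ H) (a₁, b) (a₂, b) =
      mCount G a₁ a₂ * Nat.card W + nCount G a₁ a₂ * H.edgeSet.ncard := by
  have hhoriz : {p : Sym2 V × W | p.1 ∈ G.edgeSet ∧
      edgeDist (G □ H) (a₁, b) (p.1.map (·, p.2)) <
        edgeDist (G □ H) (a₂, b) (p.1.map (·, p.2))} =
      {s ∈ G.edgeSet | edgeDist G a₁ s < edgeDist G a₂ s} ×ˢ Set.univ := by
    ext ⟨s, w⟩
    simp [edgeDist_boxProd_map_left hG hH]
  have hvert : {p : V × Sym2 W | p.2 ∈ H.edgeSet ∧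
      edgeDist (G □ H) (a₁, b) (p.2.map (p.1, ·)) <
        edgeDist (G □ H) (a₂, b) (p.2.map (p.1, ·))} =
      {u | G.dist u a₁ < G.dist u a₂} ×ˢ H.edgeSet := by
    ext ⟨u, s⟩
    simp [edgeDist_boxProd_map_right hG hH, dist_comm (u := u), and_comm]
  rw [mCount, ncard_sep_edgeSet_boxProd, hhoriz, hvert, Set.ncard_prod, Set.ncard_prod,
    Set.ncard_univ, mCount, nCount]

lemma mCount_boxProd_right [Finite V] [Finite W] (hG : G.Preconnected) (hH : H.Preconnected)
    (a : V) (b₁ b₂ : W) :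
    mCount (G □ H) (a, b₁) (a, b₂) =
      mCount H b₁ b₂ * Nat.card V + nCount H b₁ b₂ * G.edgeSet.ncard := by
  rw [← mCount_boxProd_left hH hG b₁ b₂ a]
  exact (boxProdComm H G).mCount_map (b₁, a) (b₂, a)

end SimpleGraph

/-- if `A □ B` is Gt-NEDB with constant `γ'`, then (after
consistent labeling) the weighted counts from `A`-edges and `B`-edges coincide,
both being equal to `t·γ'`. -/
theorem stmt19 {V W : Type*} [Fintype V] [Fintype W]
    (A : SimpleGraph V) (B : SimpleGraph W) (t γ : ℕ)
    (hA : A.Connected) (hB : B.Connected)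
    (hNEDB : ∀ p q : V × W, (A.boxProd B).Adj p q →
      (mCount (A.boxProd B) p q = t * γ ∧ mCount (A.boxProd B) q p = γ) ∨
      (mCount (A.boxProd B) q p = t * γ ∧ mCount (A.boxProd B) p q = γ)) :
    ∀ a₁ a₂ : V, A.Adj a₁ a₂ → ∀ b₁ b₂ : W, B.Adj b₁ b₂ →
      ∃ (a a' : V) (b b' : W),
        s(a, a') = s(a₁, a₂) ∧ s(b, b') = s(b₁, b₂) ∧
        mCount A a a' * Fintype.card W + nCount A a a' * B.edgeSet.ncard = t * γ ∧
        mCount B b b' * Fintype.card V + nCount B b b' * A.edgeSet.ncard = t * γ := by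
  intro a₁ a₂ ha b₁ b₂ hb
  obtain ⟨a, a', hsa, hka⟩ : ∃ a a', s(a, a') = s(a₁, a₂) ∧
      mCount (A □ B) (a, b₁) (a', b₁) = t * γ := by
    rcases hNEDB _ _ (boxProd_adj_left.2 ha) with ⟨h, -⟩ | ⟨h, -⟩
    exacts [⟨a₁, a₂, rfl, h⟩, ⟨a₂, a₁, Sym2.eq_swap, h⟩]
  obtain ⟨b, b', hsb, hkb⟩ : ∃ b b', s(b, b') = s(b₁, b₂) ∧
      mCount (A □ B) (a₁, b) (a₁, b') = t * γ := by
    rcases hNEDB _ _ (boxProd_adj_right.2 hb) with ⟨h, -⟩ | ⟨h, -⟩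
    exacts [⟨b₁, b₂, rfl, h⟩, ⟨b₂, b₁, Sym2.eq_swap, h⟩]
  rw [mCount_boxProd_left hA.preconnected hB.preconnected, Nat.card_eq_fintype_card] at hka
  rw [mCount_boxProd_right hA.preconnected hB.preconnected, Nat.card_eq_fintype_card] at hkb
  exact ⟨a, a', b, b', hsa, hsb, hka, hkb⟩
end
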